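/- arXiv:2203.06535 — 2 statements merged into one kernel-verified Lean document; each statement's English description precedes it below -/
import Mathlib

section
/- Let S be a finite semigroup with a zero element 0 (that is, 0·s = s·0 = 0 for all s ∈ S) that is 0-simple: S has exactly two distinct ideals, namely {0} and S. Order S by setting x ≤ y if and only if x = y or y = 0. Then ≤ is a stable partial order and S, equipped with this order, is a congenial finite ordered semigroup. -/
/-!
Common definitions for formalizing "Well Quasi-Orders Arising from Finite
Ordered Semigroups" (Klíma, Kolegar).

Words over an alphabet `A` are modelled as `List A`; nonempty words are often
given as a head letter together with the tail list.
-/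

/-- The product `σ(a)·σ(b₁)⋯σ(bₖ)` of the nonempty word `a :: w`
(where `w = [b₁,…,bₖ]`) under the multiplicative extension of `σ`. -/
def wordProd {A S : Type} [Semigroup S] (σ : A → S) (a : A) (w : List A) : S :=
  w.foldl (fun s b => s * σ b) (σ a)

/-- The relation `u ≤σ v` on finite words: there are factorizations
`u = a₁…aₙ` into letters and `v = v₁…vₙ` into nonempty words with
`σ(aᵢ) ≤ σ(vᵢ)` for all `i`.  The order on `S` is passed explicitly
as a relation `le`. -/
inductive LeSigma {A S : Type} [Semigroup S] (le : S → S → Prop) (σ : A → S) :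
    List A → List A → Prop
  | nil : LeSigma le σ [] []
  | cons {a b : A} {v u w : List A} :
      le (σ a) (wordProd σ b v) → LeSigma le σ u w →
      LeSigma le σ (a :: u) (b :: (v ++ w))

/-- A relation on finite words is a well quasi-order if every infinite
sequence of words has indices `i < j` with the `i`-th word below the `j`-th. -/
def IsWqo {A : Type} (r : List A → List A → Prop) : Prop :=
  ∀ f : ℕ → List A, ∃ i j : ℕ, i < j ∧ r (f i) (f j)

/-- A finite ordered semigroup `S` (with order relation `le`) is congenial if
for every finite alphabet `A` and every map `σ : A → S` the relation `≤σ`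
is a well quasi-order. -/
def Congenial (S : Type) [Semigroup S] (le : S → S → Prop) : Prop :=
  ∀ (A : Type) [Fintype A] (σ : A → S), IsWqo (LeSigma le σ)

/-- Stability of an order relation on a semigroup: it is compatible with
multiplication on both sides. -/
def Stable {S : Type} [Semigroup S] (le : S → S → Prop) : Prop :=
  ∀ x y s : S, le x y → le (s * x) (s * y) ∧ le (x * s) (y * s)

/-- `sPow s n = s^(n+1)`: the `(n+1)`-st power of `s` in a semigroup. -/
def sPow {S : Type} [Semigroup S] (s : S) : ℕ → S
  | 0 => s
  | n + 1 => sPow s n * s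

/-- `e` is the idempotent positive power `s^ω` of `s`: it is a positive power
of `s` and it is idempotent.  (In a finite semigroup such an `e` exists and
is unique.) -/
def IsIdemPow {S : Type} [Semigroup S] (s e : S) : Prop :=
  (∃ n : ℕ, e = sPow s n) ∧ e * e = e

/-- `seqProd s i k` is the product `s i * s (i+1) * ⋯ * s (i+k)`. -/
def seqProd {S : Type} [Semigroup S] (s : ℕ → S) (i : ℕ) : ℕ → S
  | 0 => s i
  | k + 1 => seqProd s i k * s (i + k + 1)

/-- The (finite, nonempty) word `v` is a factor `w(i)w(i+1)…w(j)` of the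
infinite word `w : ℕ → A`. -/
def FactorOf {A : Type} (v : List A) (w : ℕ → A) : Prop :=
  ∃ i n : ℕ, v = (List.range (n + 1)).map fun k => w (i + k)

/-- A set `L` of (nonempty) finite words over `A` is unavoidable if every
infinite word over `A` has a finite factor belonging to `L`. -/
def Unavoidable {A : Type} (L : Set (List A)) : Prop :=
  ∀ w : ℕ → A, ∃ v ∈ L, FactorOf v w

/-- `listPow u p` is the concatenation of `p` copies of the word `u`. -/
def listPow {A : Type} (u : List A) : ℕ → List A
  | 0 => []
  | n + 1 => u ++ listPow u n

/-- The product of a nonempty list of semigroup elements. -/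
def neProd {S : Type} [Semigroup S] : (l : List S) → l ≠ [] → S
  | [], h => absurd rfl h
  | a :: t, _ => wordProd id a t

/-- The periodic infinite word `u^∞ = uuu…` determined by a nonempty
finite word `u`. -/
def periodicWord {A : Type} (u : List A) (h : u ≠ []) : ℕ → A :=
  fun n => u.get ⟨n % u.length, Nat.mod_lt _ (List.length_pos_iff.mpr h)⟩

/-- An ideal of a semigroup: a nonempty subset closed under multiplication by
arbitrary elements on both sides. -/
def IsIdeal {S : Type} [Mul S] (I : Set S) : Prop :=
  I.Nonempty ∧ ∀ t ∈ I, ∀ s : S, t * s ∈ I ∧ s * t ∈ I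

/-- The order on a semigroup with zero making `0` the top element and all
other elements pairwise incomparable: `x ≤ y` iff `x = y` or `y = 0`. -/
def zeroTopLe {S : Type} [Zero S] : S → S → Prop := fun x y => x = y ∨ y = 0

set_option linter.unusedSectionVars false

namespace Stmt13Aux


lemma exists_idem_pow {M : Type} [Monoid M] [Finite M] (x : M) :
    ∃ n : ℕ, 0 < n ∧ x ^ n * x ^ n = x ^ n := by
  have key : ∀ a b : ℕ, a < b → x ^ a = x ^ b → ∃ n : ℕ, 0 < n ∧ x ^ n * x ^ n = x ^ n := by
    intro a b hab he
    set c := b - a with hc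
    have hc0 : 0 < c := by omega
    have hac : x ^ (a + c) = x ^ a := by rw [show a + c = b by omega, he]
    have step : ∀ m, a ≤ m → x ^ (m + c) = x ^ m := by
      intro m hm
      obtain ⟨d, rfl⟩ := Nat.exists_eq_add_of_le hm
      calc x ^ (a + d + c) = x ^ (a + c) * x ^ d := by
            rw [show a + d + c = (a + c) + d by ring, pow_add]
        _ = x ^ a * x ^ d := by rw [hac]
        _ = x ^ (a + d) := by rw [pow_add]
    have iter : ∀ k m, a ≤ m → x ^ (m + k * c) = x ^ m := by
      intro k
      induction k with
      | zero => simp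
      | succ k ih =>
        intro m hm
        have h' : m + (k + 1) * c = (m + k * c) + c := by ring
        rw [h', step _ (by omega), ih m hm]
    refine ⟨c * (a + 1), by positivity, ?_⟩
    have hge : a ≤ c * (a + 1) := by nlinarith
    rw [← pow_add, show c * (a + 1) + c * (a + 1) = c * (a+1) + (a+1) * c by ring,
      iter (a+1) _ hge]
  obtain ⟨a, b, hab, he⟩ := Finite.exists_ne_map_eq_of_infinite (fun n : ℕ => x ^ n)
  rcases lt_or_gt_of_ne hab with h | h
  · exact key a b h he
  · exact key b a h he.symm

variable {S : Type} [SemigroupWithZero S]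

def JFull (S : Type) [SemigroupWithZero S] : Prop :=
  ∀ x y : S, x ≠ 0 → ∃ s t : WithOne S, s * (x : WithOne S) * t = (y : WithOne S)

lemma jfull_of_onlytwo
    (honlytwo : ∀ I : Set S, IsIdeal I → I = {0} ∨ I = Set.univ) : JFull S := by
  intro x y hx
  set I : Set S := {y : S | ∃ s t : WithOne S, s * (x : WithOne S) * t = (y : WithOne S)} with hI
  have hxI : x ∈ I := ⟨1, 1, by rw [one_mul, mul_one]⟩
  have hIdeal : IsIdeal I := by
    constructor
    · exact ⟨x, hxI⟩
    · rintro t ⟨s₁, t₁, hst⟩ u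
      constructor
      · exact ⟨s₁, t₁ * (u : WithOne S), by
          rw [← mul_assoc, hst, ← WithOne.coe_mul]⟩
      · refine ⟨(u : WithOne S) * s₁, t₁, ?_⟩
        rw [WithOne.coe_mul, ← hst]
        simp [mul_assoc]
  rcases honlytwo I hIdeal with h | h
  · rw [h] at hxI
    exact absurd hxI hx
  · have hyI : y ∈ I := by rw [h]; trivial
    exact hyI

variable [Finite (WithOne S)]

lemma r_fact (hJ : JFull S) {x b : S} (hx : x ≠ 0) {r : WithOne S}
    (hxr : (x : WithOne S) = (b : WithOne S) * r) :
    ∃ w : WithOne S, (x : WithOne S) * w = (b : WithOne S) := by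
  obtain ⟨s, t, hst⟩ := hJ x b hx
  have base : (b : WithOne S) = s * (b : WithOne S) * (r * t) := by
    calc (b : WithOne S) = s * (x : WithOne S) * t := hst.symm
      _ = s * ((b : WithOne S) * r) * t := by rw [← hxr]
      _ = s * (b : WithOne S) * (r * t) := by simp [mul_assoc]
  have key : ∀ k : ℕ, (b : WithOne S) = s ^ (k+1) * (b : WithOne S) * (r * t) ^ (k+1) := by
    intro k
    induction k with
    | zero => simpa using base
    | succ k ih =>
      calc (b : WithOne S) = s * (b : WithOne S) * (r*t) := base
        _ = s * (s ^ (k+1) * (b : WithOne S) * (r*t)^(k+1)) * (r*t) := by rw [← ih]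
        _ = s ^ (k+1+1) * (b : WithOne S) * (r*t)^(k+1+1) := by
            rw [pow_succ' s (k+1), pow_succ (r*t) (k+1)]
            simp [mul_assoc]
  obtain ⟨n, hn, he⟩ := exists_idem_pow (r * t)
  have h1 : (b : WithOne S) = s ^ n * (b : WithOne S) * (r*t) ^ n := by
    have := key (n - 1)
    rwa [show n - 1 + 1 = n by omega] at this
  have h2 : (b : WithOne S) * (r*t) ^ n = (b : WithOne S) := by
    conv_lhs => rw [h1]
    rw [mul_assoc, he, ← h1]
  refine ⟨t * (r*t) ^ (n-1), ?_⟩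
  calc (x : WithOne S) * (t * (r*t)^(n-1)) = (b : WithOne S) * (r * (t * (r*t)^(n-1))) := by
        rw [hxr, mul_assoc]
    _ = (b : WithOne S) * (r*t)^n := by
        rw [show (r*t)^n = (r*t) * (r*t)^(n-1) by
          rw [← pow_succ']; congr 1; omega]
        simp [mul_assoc]
    _ = (b : WithOne S) := h2

lemma l_fact (hJ : JFull S) {q x : S} (hq : q ≠ 0) {p : WithOne S}
    (hqx : (q : WithOne S) = p * (x : WithOne S)) :
    ∃ p' : WithOne S, p' * (q : WithOne S) = (x : WithOne S) := by
  obtain ⟨s, t, hst⟩ := hJ q x hq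
  have base : (x : WithOne S) = (s * p) * (x : WithOne S) * t := by
    calc (x : WithOne S) = s * (q : WithOne S) * t := hst.symm
      _ = s * (p * (x : WithOne S)) * t := by rw [← hqx]
      _ = (s * p) * (x : WithOne S) * t := by simp [mul_assoc]
  have key : ∀ k : ℕ, (x : WithOne S) = (s*p) ^ (k+1) * (x : WithOne S) * t ^ (k+1) := by
    intro k
    induction k with
    | zero => simpa using base
    | succ k ih =>
      calc (x : WithOne S) = (s*p) * (x : WithOne S) * t := base
        _ = (s*p) * ((s*p) ^ (k+1) * (x : WithOne S) * t^(k+1)) * t := by rw [← ih]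
        _ = (s*p) ^ (k+1+1) * (x : WithOne S) * t^(k+1+1) := by
            rw [pow_succ' (s*p) (k+1), pow_succ t (k+1)]
            simp [mul_assoc]
  obtain ⟨n, hn, he⟩ := exists_idem_pow (s * p)
  have h1 : (x : WithOne S) = (s*p) ^ n * (x : WithOne S) * t ^ n := by
    have := key (n - 1)
    rwa [show n - 1 + 1 = n by omega] at this
  have h2 : (s*p) ^ n * (x : WithOne S) = (x : WithOne S) := by
    conv_lhs => rw [h1]
    rw [← mul_assoc, ← mul_assoc, he]
    exact h1.symm
  refine ⟨(s*p)^(n-1) * s, ?_⟩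
  calc ((s*p)^(n-1) * s) * (q : WithOne S) = (s*p)^(n-1) * (s * (p * (x : WithOne S))) := by
        rw [hqx]; simp [mul_assoc]
    _ = (s*p)^n * (x : WithOne S) := by
        rw [show (s*p)^n = (s*p)^(n-1) * (s*p) by rw [← pow_succ]; congr 1; omega]
        simp [mul_assoc]
    _ = (x : WithOne S) := h2

omit [Finite (WithOne S)] in
lemma mul_coe_zero (p : WithOne S) : p * ((0:S) : WithOne S) = ((0:S) : WithOne S) := by
  induction p using WithOne.cases_on
  · simp
  · intro a; rw [← WithOne.coe_mul, mul_zero]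

omit [Finite (WithOne S)] in
lemma coe_zero_mul (p : WithOne S) : ((0:S) : WithOne S) * p = ((0:S) : WithOne S) := by
  induction p using WithOne.cases_on
  · simp
  · intro a; rw [← WithOne.coe_mul, zero_mul]

lemma cancel (hJ : JFull S) {q b x : S} (hq : q ≠ 0) {p r : WithOne S}
    (hqb : p * (b : WithOne S) = (q : WithOne S))
    (hqx : p * (x : WithOne S) = (q : WithOne S))
    (hxr : (x : WithOne S) = (b : WithOne S) * r) : x = b := by
  have hx : x ≠ 0 := by
    rintro rfl
    rw [mul_coe_zero] at hqx
    exact hq (WithOne.coe_inj.mp hqx).symm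
  obtain ⟨w, hw⟩ := r_fact hJ hx hxr
  obtain ⟨p', hp'⟩ := l_fact hJ hq hqx.symm
  have h1 : p' * p * (x : WithOne S) = (x : WithOne S) := by rw [mul_assoc, hqx, hp']
  have h2 : p' * p * (b : WithOne S) = (b : WithOne S) := by
    rw [← hw, ← mul_assoc, h1]
  have : (x : WithOne S) = (b : WithOne S) := by
    rw [← h1, mul_assoc, hqx, ← hqb, ← mul_assoc, h2]
  exact WithOne.coe_inj.mp this


variable {A : Type} (σ : A → S)
/-- Multiplicative extension of `σ` into `WithOne S`. -/
def piW (l : List A) : WithOne S := (l.map fun a => ((σ a : S) : WithOne S)).prod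

@[simp] lemma piW_nil : piW σ ([] : List A) = 1 := rfl

@[simp] lemma piW_cons (a : A) (t : List A) :
    piW σ (a :: t) = ((σ a : S) : WithOne S) * piW σ t := by
  simp [piW]

lemma piW_append (l₁ l₂ : List A) : piW σ (l₁ ++ l₂) = piW σ l₁ * piW σ l₂ := by
  simp [piW]

lemma coe_foldl (t : List A) (s : S) :
    ((t.foldl (fun s b => s * σ b) s : S) : WithOne S) = (s : WithOne S) * piW σ t := by
  induction t generalizing s with
  | nil => simp
  | cons a t ih =>
    rw [List.foldl_cons, ih, piW_cons, WithOne.coe_mul, mul_assoc]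

lemma coe_wordProd (b : A) (t : List A) :
    ((wordProd σ b t : S) : WithOne S) = piW σ (b :: t) := by
  rw [wordProd, coe_foldl, piW_cons]

lemma piW_ne_one (l : List A) (h : l ≠ []) : piW σ l ≠ 1 := by
  cases l with
  | nil => exact absurd rfl h
  | cons b t => rw [← coe_wordProd]; exact WithOne.coe_ne_one

lemma eq_nil_of_piW_eq_one {l : List A} (h : piW σ l = 1) : l = [] := by
  by_contra hne
  exact piW_ne_one σ l hne h

/-- Enriched word: position `k` carries the product of the prefix before it
(times an outer context `p`) and the letter at position `k`. -/
def Eaux : List A → WithOne S → List (WithOne S × A)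
  | [], _ => []
  | a :: t, p => (p, a) :: Eaux t (p * ((σ a : S) : WithOne S))

lemma Eaux_append (l₁ l₂ : List A) (p : WithOne S) :
    Eaux σ (l₁ ++ l₂) p = Eaux σ l₁ p ++ Eaux σ l₂ (p * piW σ l₁) := by
  induction l₁ generalizing p with
  | nil => simp [Eaux]
  | cons a t ih =>
    rw [List.cons_append, Eaux, Eaux, ih, piW_cons, ← mul_assoc]
    rfl

def Ew (d : List A) : List (WithOne S × A) := Eaux σ d 1

lemma Eaux_split : ∀ (l : List A) (p : WithOne S) (t₁ t₂ : List (WithOne S × A))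
    (pv : WithOne S) (b : A), Eaux σ l p = t₁ ++ (pv, b) :: t₂ →
    ∃ d₁ d₂ : List A, l = d₁ ++ b :: d₂ ∧ t₁ = Eaux σ d₁ p ∧ pv = p * piW σ d₁ := by
  intro l
  induction l with
  | nil => intro p t₁ t₂ pv b h; cases t₁ <;> simp [Eaux] at h
  | cons a t ih =>
    intro p t₁ t₂ pv b h
    rw [Eaux] at h
    cases t₁ with
    | nil =>
      simp only [List.nil_append, List.cons.injEq] at h
      obtain ⟨h1, _⟩ := h
      obtain ⟨h1a, h1b⟩ := Prod.mk.injEq .. ▸ h1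
      refine ⟨[], t, ?_, rfl, ?_⟩
      · rw [← h1b]; rfl
      · rw [← h1a]; simp
    | cons e t₁' =>
      simp only [List.cons_append, List.cons.injEq] at h
      obtain ⟨he, h2⟩ := h
      obtain ⟨d₁, d₂, hl, ht, hpv⟩ := ih _ t₁' t₂ pv b h2
      refine ⟨a :: d₁, d₂, by rw [hl]; rfl, ?_, ?_⟩
      · rw [← he, ht]; rfl
      · rw [hpv, piW_cons, ← mul_assoc]

/-- Splitting a sublist relation at the last element of the source. -/
lemma sublist_split_last {β : Type} : ∀ (l' l : List β) (x : β),
    (l ++ [x]).Sublist l' → ∃ t₁ t₂ : List β, l' = t₁ ++ x :: t₂ ∧ l.Sublist t₁ := by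
  intro l'
  induction l' with
  | nil =>
    intro l x h
    have := List.sublist_nil.mp h
    simp at this
  | cons y l'' ih =>
    intro l x h
    cases l with
    | nil =>
      simp only [List.nil_append] at h
      cases h with
      | cons _ h' =>
        obtain ⟨t₁, t₂, h1, h2⟩ := ih [] x (by simpa using h')
        exact ⟨y :: t₁, t₂, by rw [h1]; rfl, List.nil_sublist _⟩
      | cons_cons _ h' => exact ⟨[], l'', rfl, List.nil_sublist _⟩
    | cons z l₀ =>
      rw [List.cons_append] at h
      cases h with
      | cons _ h' =>
        obtain ⟨t₁, t₂, h1, h2⟩ := ih (z :: l₀) x h'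
        exact ⟨y :: t₁, t₂, by rw [h1]; rfl, h2.cons y⟩
      | cons_cons _ h' =>
        obtain ⟨t₁, t₂, h1, h2⟩ := ih l₀ x h'
        exact ⟨y :: t₁, t₂, by rw [h1]; rfl, h2.cons₂ y⟩

/-- all nonempty prefixes have nonzero value. -/
def GoodBuf (d : List A) : Prop :=
  ∀ p : List A, p <+: d → p ≠ [] → piW σ p ≠ ((0:S) : WithOne S)

lemma goodBuf_nil : GoodBuf σ ([] : List A) := by
  intro p hp hne
  rw [List.prefix_nil] at hp
  exact absurd hp hne

lemma goodBuf_prefix {d d' : List A} (h : GoodBuf σ d') (hp : d <+: d') : GoodBuf σ d :=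
  fun p hpd hne => h p (hpd.trans hp) hne

lemma goodBuf_extend {d : List A} {a : A} (h : GoodBuf σ d)
    (hz : piW σ (d ++ [a]) ≠ ((0:S) : WithOne S)) : GoodBuf σ (d ++ [a]) := by
  intro p hp hne
  rcases List.prefix_concat_iff.mp hp with h1 | h1
  · rw [h1]; exact hz
  · exact h p h1 hne


/-- Main zero-free block-matching lemma. -/
lemma zfmain (hJ : JFull S) : ∀ (d d' : List A), d ≠ [] → GoodBuf σ d →
    piW σ d = piW σ d' → (Ew σ d).Sublist (Ew σ d') →
    ∃ Bs : List (List A), Bs.flatten = d' ∧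
      List.Forall₂ (fun a B => ∃ b t, B = b :: t ∧ wordProd σ b t = σ a) d Bs := by
  intro d
  induction d using List.reverseRecOn with
  | nil => intro d' h; exact absurd rfl h
  | append_singleton g b ih =>
    intro d' _ hgood hpi hsub
    by_cases hgne : g = []
    · -- base case : d = [b]
      subst hgne
      refine ⟨[d'], by simp, ?_⟩
      have hne : d' ≠ [] := by
        intro h
        subst h
        rw [show piW σ ([] ++ [b] : List A) = ((σ b : S) : WithOne S) by simp] at hpi
        exact WithOne.coe_ne_one hpi
      obtain ⟨b', t', rfl⟩ := List.exists_cons_of_ne_nil hne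
      refine List.Forall₂.cons ⟨b', t', rfl, ?_⟩ List.Forall₂.nil
      have : ((wordProd σ b' t' : S) : WithOne S) = ((σ b : S) : WithOne S) := by
        rw [coe_wordProd σ, ← hpi]; simp
      exact WithOne.coe_inj.mp this
    · -- step case
      have hEd : Ew σ (g ++ [b]) = Ew σ g ++ [(piW σ g, b)] := by
        rw [Ew, Eaux_append, one_mul]
        rfl
      rw [hEd] at hsub
      obtain ⟨t₁, t₂, hsplit, hsub'⟩ := sublist_split_last (Ew σ d') (Ew σ g) (piW σ g, b) hsub
      obtain ⟨d₁, d₂, hd', ht₁, hpv⟩ := Eaux_split σ d' 1 t₁ t₂ (piW σ g) b hsplit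
      rw [one_mul] at hpv
      have hEg : (Ew σ g).Sublist (Ew σ d₁) := by
        have : Ew σ d₁ = t₁ := by rw [Ew, ht₁]
        rw [this]; exact hsub'
      have hgoodg : GoodBuf σ g := goodBuf_prefix σ hgood ⟨[b], rfl⟩
      obtain ⟨Bs₀, hflat, hfa⟩ := ih d₁ hgne hgoodg hpv hEg
      -- last block
      set Bl : List A := b :: d₂ with hBl
      -- the value q of the full word d
      obtain ⟨cc, tt, hcc⟩ := List.exists_cons_of_ne_nil (show g ++ [b] ≠ [] by simp)
      set q : S := wordProd σ cc tt with hq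
      have hqpi : ((q : S) : WithOne S) = piW σ (g ++ [b]) := by
        rw [hq, coe_wordProd σ, ← hcc]
      have hqne : q ≠ 0 := by
        intro h0
        have := hgood (g ++ [b]) (List.prefix_refl _) (by simp)
        rw [← hqpi, h0] at this
        exact this rfl
      set x : S := wordProd σ b d₂ with hx
      have hxpi : ((x : S) : WithOne S) = piW σ Bl := by rw [hx, coe_wordProd σ]
      have hqb : piW σ g * ((σ b : S) : WithOne S) = (q : WithOne S) := by
        rw [hqpi, piW_append]; simp
      have hqx : piW σ g * ((x : S) : WithOne S) = (q : WithOne S) := by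
        rw [hxpi, hpv, hqpi, ← piW_append, hpi, hd']
      have hxr : ((x : S) : WithOne S) = ((σ b : S) : WithOne S) * piW σ d₂ := by
        rw [hxpi, hBl, piW_cons]
      have hxb : x = σ b := cancel hJ hqne hqb hqx hxr
      refine ⟨Bs₀ ++ [Bl], ?_, ?_⟩
      · rw [List.flatten_append, hflat, hd']
        simp [hBl]
      · refine List.rel_append hfa (List.Forall₂.cons ⟨b, d₂, rfl, hxb⟩ List.Forall₂.nil)

open Classical in
/-- Greedy decomposition into shortest zero-value segments. -/
noncomputable def scanZ : List A → List A → List (List A × A) × List A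
  | [], buf => ([], buf)
  | a :: t, buf =>
    if piW σ (buf ++ [a]) = ((0:S) : WithOne S) then
      ((buf, a) :: (scanZ t []).1, (scanZ t []).2)
    else scanZ t (buf ++ [a])

lemma scan_flat : ∀ (l buf : List A),
    ((scanZ σ l buf).1.map fun s => s.1 ++ [s.2]).flatten ++ (scanZ σ l buf).2 = buf ++ l := by
  intro l
  induction l with
  | nil => intro buf; simp [scanZ]
  | cons a t ih =>
    intro buf
    rw [scanZ]
    split
    · simp only [List.map_cons, List.flatten_cons, List.append_assoc]
      rw [ih []]
      simp
    · rw [ih (buf ++ [a])]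
      simp

lemma scan_good : ∀ (l buf : List A), GoodBuf σ buf →
    (∀ s ∈ (scanZ σ l buf).1, GoodBuf σ s.1) ∧ GoodBuf σ (scanZ σ l buf).2 := by
  intro l
  induction l with
  | nil => intro buf h; exact ⟨by simp [scanZ], by simpa [scanZ] using h⟩
  | cons a t ih =>
    intro buf h
    rw [scanZ]
    split
    · refine ⟨?_, (ih [] (goodBuf_nil σ)).2⟩
      intro s hs
      simp only [List.mem_cons] at hs
      rcases hs with rfl | hs
      · exact h
      · exact (ih [] (goodBuf_nil σ)).1 s hs
    · exact ih (buf ++ [a]) (goodBuf_extend σ h (by assumption))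

lemma scan_zero : ∀ (l buf : List A), ∀ s ∈ (scanZ σ l buf).1,
    piW σ (s.1 ++ [s.2]) = ((0:S) : WithOne S) := by
  intro l
  induction l with
  | nil => intro buf s hs; simp [scanZ] at hs
  | cons a t ih =>
    intro buf s hs
    rw [scanZ] at hs
    split at hs
    · simp only [List.mem_cons] at hs
      rcases hs with rfl | hs
      · assumption
      · exact ih [] s hs
    · exact ih (buf ++ [a]) s hs

noncomputable def zeta (w : List A) : ℕ := (scanZ σ w []).1.length

-- LeSigma generic lemmas
lemma leSigma_append {le : S → S → Prop} {u₁ v₁ u₂ v₂ : List A}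
    (h₁ : LeSigma le σ u₁ v₁) (h₂ : LeSigma le σ u₂ v₂) :
    LeSigma le σ (u₁ ++ u₂) (v₁ ++ v₂) := by
  induction h₁ with
  | nil => simpa using h₂
  | cons hle _ ih =>
    rw [List.cons_append, List.cons_append, List.append_assoc]
    exact LeSigma.cons hle ih

lemma leSigma_refl {le : S → S → Prop} (hrefl : ∀ s : S, le s s) :
    ∀ u : List A, LeSigma le σ u u := by
  intro u
  induction u with
  | nil => exact LeSigma.nil
  | cons a u ih =>
    have := LeSigma.cons (σ := σ) (a := a) (b := a) (v := []) (hrefl (σ a)) ih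
    simpa using this

lemma leSigma_blocks {le : S → S → Prop} : ∀ {u : List A} {Bs : List (List A)},
    List.Forall₂ (fun a B => ∃ b t, B = b :: t ∧ le (σ a) (wordProd σ b t)) u Bs →
    LeSigma le σ u Bs.flatten := by
  intro u Bs h
  induction h with
  | nil => exact LeSigma.nil
  | @cons a B u' Bs' hab _ ih =>
    obtain ⟨b, t, rfl, hle⟩ := hab
    rw [List.flatten_cons, List.cons_append]
    exact LeSigma.cons hle ih

/-- splitting a word with many zero segments below `u`. -/
lemma leSigma_zero_blocks : ∀ (u : List A) (segs : List (List A × A)) (r : List A),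
    u ≠ [] → u.length ≤ segs.length →
    (∀ s ∈ segs, piW σ (s.1 ++ [s.2]) = ((0:S) : WithOne S)) →
    LeSigma zeroTopLe σ u ((segs.map fun s => s.1 ++ [s.2]).flatten ++ r) := by
  intro u
  induction u with
  | nil => intro segs r h; exact absurd rfl h
  | cons a u' ih =>
    intro segs r _ hlen hz
    cases segs with
    | nil => simp at hlen
    | cons s₀ segs' =>
      have hz₀ : piW σ (s₀.1 ++ [s₀.2]) = ((0:S) : WithOne S) := hz s₀ (by simp)
      obtain ⟨b, t, hbt⟩ := List.exists_cons_of_ne_nil (show s₀.1 ++ [s₀.2] ≠ [] by simp)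
      cases u' with
      | nil =>
        -- single letter; one big block
        set v := ((( s₀ :: segs').map fun s => s.1 ++ [s.2]).flatten ++ r) with hv
        have hv2 : v = b :: (t ++ (((segs'.map fun s => s.1 ++ [s.2]).flatten) ++ r)) := by
          rw [hv, List.map_cons, List.flatten_cons, hbt]
          simp
        have hval : wordProd σ b (t ++ ((segs'.map fun s => s.1 ++ [s.2]).flatten ++ r)) = 0 := by
          have : ((wordProd σ b (t ++ ((segs'.map fun s => s.1 ++ [s.2]).flatten ++ r)) : S) : WithOne S)
              = ((0:S) : WithOne S) := by
            rw [coe_wordProd σ, show (b :: (t ++ ((segs'.map fun s => s.1 ++ [s.2]).flatten ++ r)))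
              = (b :: t) ++ ((segs'.map fun s => s.1 ++ [s.2]).flatten ++ r) by simp,
              piW_append, ← hbt, hz₀, coe_zero_mul]
          exact WithOne.coe_inj.mp this
        rw [hv2]
        have := LeSigma.cons (le := zeroTopLe) (σ := σ) (a := a) (b := b)
          (v := t ++ ((segs'.map fun s => s.1 ++ [s.2]).flatten ++ r)) (w := [])
          (Or.inr hval) LeSigma.nil
        simpa using this
      | cons a₂ u'' =>
        -- first block is exactly the first segment
        have hval : wordProd σ b t = 0 := by
          have : ((wordProd σ b t : S) : WithOne S) = ((0:S) : WithOne S) := by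
            rw [coe_wordProd σ, ← hbt, hz₀]
          exact WithOne.coe_inj.mp this
        have ihh := ih segs' r (by simp) (by simpa using Nat.le_of_succ_le_succ hlen)
          (fun s hs => hz s (by simp [hs]))
        have := LeSigma.cons (le := zeroTopLe) (σ := σ) (a := a) (b := b) (v := t)
          (Or.inr hval) ihh
        rw [List.map_cons, List.flatten_cons, hbt]
        simpa using this

/-- Splitting a sublist relation at a marked element, assuming markers are
scarce enough on the right. -/
lemma key_split {β : Type} (P : β → Bool) :
    ∀ (γ c : List β) {β₁ β₂ : List β} {s s' : β},
    (c ++ s :: β₁).Sublist (γ ++ s' :: β₂) → P s → P s' →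
    (∀ g ∈ γ, ¬ P g) → (∀ g ∈ c, ¬ P g) →
    List.countP P β₂ < List.countP P (s :: β₁) →
    c.Sublist γ ∧ s = s' ∧ β₁.Sublist β₂ := by
  intro γ
  induction γ with
  | nil =>
    intro c β₁ β₂ s s' h hPs hPs' hγ hc hcount
    cases c with
    | nil =>
      rw [List.nil_append] at h
      rw [List.nil_append] at h
      cases h with
      | cons _ h' =>
        exfalso
        have := h'.countP_le (p := P)
        omega
      | cons_cons _ h' => exact ⟨List.nil_sublist _, rfl, h'⟩
    | cons g c' =>
      rw [List.cons_append, List.nil_append] at h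
      cases h with
      | cons _ h' =>
        exfalso
        have := h'.countP_le (p := P)
        simp only [List.countP_cons, List.countP_append] at this hcount
        omega
      | cons_cons _ h' =>
        exact absurd hPs' (hc s' (by simp))
  | cons g γ' ih =>
    intro c β₁ β₂ s s' h hPs hPs' hγ hc hcount
    rw [List.cons_append] at h
    cases c with
    | nil =>
      rw [List.nil_append] at h
      cases h with
      | cons _ h' =>
        obtain ⟨h1, h2, h3⟩ := ih [] (by simpa using h') hPs hPs'
          (fun x hx => hγ x (by simp [hx])) (by simp) hcount
        exact ⟨List.nil_sublist _, h2, h3⟩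
      | cons_cons _ h' =>
        exact absurd hPs (hγ g (by simp))
    | cons g₀ c' =>
      rw [List.cons_append] at h
      cases h with
      | cons _ h' =>
        obtain ⟨h1, h2, h3⟩ := ih (g₀ :: c') (by simpa using h') hPs hPs'
          (fun x hx => hγ x (by simp [hx])) hc hcount
        exact ⟨h1.cons g, h2, h3⟩
      | cons_cons _ h' =>
        obtain ⟨h1, h2, h3⟩ := ih c' h' hPs hPs'
          (fun x hx => hγ x (by simp [hx])) (fun x hx => hc x (by simp [hx])) hcount
        exact ⟨h1.cons₂ g, h2, h3⟩

lemma sublist_of_map_sublist {α β : Type} (f : α → β) (hf : Function.Injective f)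
    {l l' : List α} (h : (l.map f).Sublist (l'.map f)) : l.Sublist l' := by
  obtain ⟨l'', hsub, heq⟩ := List.sublist_map_iff.mp h
  have : l = l'' := List.map_injective_iff.mpr hf heq
  rw [this]
  exact hsub

-- NEW
abbrev Gam (S A : Type) [SemigroupWithZero S] (B : ℕ) : Type :=
  (Fin (B+1)) ⊕ ((WithOne S × A) ⊕ ((A × (WithOne S)) ⊕ (WithOne S)))

variable (B : ℕ)

def eIt : WithOne S × A → Gam S A B := fun x => Sum.inr (Sum.inl x)
def sepIt : A × WithOne S → Gam S A B := fun x => Sum.inr (Sum.inr (Sum.inl x))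
def finIt : WithOne S → Gam S A B := fun x => Sum.inr (Sum.inr (Sum.inr x))
def initIt : Fin (B+1) → Gam S A B := Sum.inl

def isSep : Gam S A B → Bool
  | Sum.inr (Sum.inr (Sum.inl _)) => true
  | _ => false

def isFin : Gam S A B → Bool
  | Sum.inr (Sum.inr (Sum.inr _)) => true
  | _ => false

def isInit : Gam S A B → Bool
  | Sum.inl _ => true
  | _ => false

lemma eIt_inj : Function.Injective (eIt (S := S) (A := A) (B := B)) := by
  intro x y h
  simpa [eIt, Sum.inr.injEq, Sum.inl.injEq] using h

def segCode (s : List A × A) : List (Gam S A B) :=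
  ((Ew σ s.1).map (eIt B)) ++ [sepIt B (s.2, piW σ s.1)]

def tailCode (r : List A) : List (Gam S A B) :=
  ((Ew σ r).map (eIt B)) ++ [finIt B (piW σ r)]

lemma countP_eIt_map (P : Gam S A B → Bool) (hP : ∀ x, P (eIt B x) = false)
    (l : List (WithOne S × A)) : List.countP P (l.map (eIt B)) = 0 :=
  List.countP_eq_zero.mpr (by
    intro x hx
    obtain ⟨y, _, rfl⟩ := List.mem_map.mp hx
    simp [hP y])

lemma countP_sep_code (L : List (List A × A)) (r : List A) :
    List.countP (isSep B) ((L.map (segCode σ B)).flatten ++ tailCode σ B r) = L.length := by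
  induction L with
  | nil =>
    simp only [List.map_nil, List.flatten_nil, List.nil_append, tailCode]
    rw [List.countP_append, countP_eIt_map _ _ (fun x => rfl)]
    simp [List.countP_cons, isSep, finIt]
  | cons s₀ L ih =>
    simp only [List.map_cons, List.flatten_cons, List.append_assoc]
    rw [List.countP_append, ih, segCode, List.countP_append,
      countP_eIt_map _ _ (fun x => rfl)]
    simp [List.countP_cons, isSep, sepIt]
    omega

lemma countP_init_code (L : List (List A × A)) (r : List A) :
    List.countP (isInit B) ((L.map (segCode σ B)).flatten ++ tailCode σ B r) = 0 := by
  induction L with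
  | nil =>
    simp only [List.map_nil, List.flatten_nil, List.nil_append, tailCode]
    rw [List.countP_append, countP_eIt_map _ _ (fun x => rfl)]
    simp [List.countP_cons, isInit, finIt]
  | cons s₀ L ih =>
    simp only [List.map_cons, List.flatten_cons, List.append_assoc]
    rw [List.countP_append, ih, segCode, List.countP_append,
      countP_eIt_map _ _ (fun x => rfl)]
    simp [List.countP_cons, isInit, sepIt]


lemma decode (hJ : JFull S) : ∀ (sU sV : List (List A × A)) (rU rV : List A),
    sU.length = sV.length →
    (∀ s ∈ sU, GoodBuf σ s.1) → GoodBuf σ rU →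
    (((sU.map (segCode σ B)).flatten ++ tailCode σ B rU).Sublist
      ((sV.map (segCode σ B)).flatten ++ tailCode σ B rV)) →
    LeSigma zeroTopLe σ ((sU.map fun s => s.1 ++ [s.2]).flatten ++ rU)
      ((sV.map fun s => s.1 ++ [s.2]).flatten ++ rV) := by
  intro sU
  induction sU with
  | nil =>
    intro sV rU rV hlen hgood hgoodr hsub
    have hsV : sV = [] := List.length_eq_zero_iff.mp hlen.symm
    subst hsV
    simp only [List.map_nil, List.flatten_nil, List.nil_append] at hsub ⊢
    rw [tailCode, tailCode] at hsub
    have hkey := key_split (isFin B) ((Ew σ rV).map (eIt B)) ((Ew σ rU).map (eIt B))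
      (β₁ := []) (β₂ := []) hsub rfl rfl
      (by intro g hg; obtain ⟨y, _, rfl⟩ := List.mem_map.mp hg; simp [eIt, isFin])
      (by intro g hg; obtain ⟨y, _, rfl⟩ := List.mem_map.mp hg; simp [eIt, isFin])
      (by simp [List.countP_cons, isFin, finIt])
    obtain ⟨hEsub, hfin, -⟩ := hkey
    have hpi : piW σ rU = piW σ rV := by
      have := hfin
      simp only [finIt, Sum.inr.injEq] at this
      exact this
    by_cases hrU : rU = []
    · subst hrU
      have : rV = [] := eq_nil_of_piW_eq_one σ (by rw [← hpi, piW_nil])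
      rw [this]
      exact LeSigma.nil
    · have hEw : (Ew σ rU).Sublist (Ew σ rV) := sublist_of_map_sublist _ (eIt_inj B) hEsub
      obtain ⟨Bs, hflat, hfa⟩ := zfmain σ hJ rU rV hrU hgoodr hpi hEw
      have := leSigma_blocks σ (le := zeroTopLe)
        (hfa.imp (fun {a B} h => by
          obtain ⟨b, t, hbt, heq⟩ := h
          exact ⟨b, t, hbt, Or.inl heq.symm⟩))
      rwa [hflat] at this
  | cons s₀ sU' ih =>
    intro sV rU rV hlen hgood hgoodr hsub
    cases sV with
    | nil => simp at hlen
    | cons t₀ sV' =>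
      have hlen' : sU'.length = sV'.length := by simpa using hlen
      -- reshape both sides
      have hshape : ∀ (s : List A × A) (L : List (List A × A)) (r : List A),
          ((( s :: L).map (segCode σ B)).flatten ++ tailCode σ B r) =
          ((Ew σ s.1).map (eIt B)) ++ (sepIt B (s.2, piW σ s.1)) ::
            ((L.map (segCode σ B)).flatten ++ tailCode σ B r) := by
        intro s L r
        simp [segCode, List.append_assoc]
      rw [hshape, hshape] at hsub
      have hkey := key_split (isSep B) ((Ew σ t₀.1).map (eIt B)) ((Ew σ s₀.1).map (eIt B))
        hsub rfl rfl
        (by intro g hg; obtain ⟨y, _, rfl⟩ := List.mem_map.mp hg; simp [eIt, isSep])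
        (by intro g hg; obtain ⟨y, _, rfl⟩ := List.mem_map.mp hg; simp [eIt, isSep])
        (by
          rw [countP_sep_code, List.countP_cons, countP_sep_code]
          simp [isSep, sepIt, hlen'])
      obtain ⟨hEsub, hsep, hrest⟩ := hkey
      have hsep' : s₀.2 = t₀.2 ∧ piW σ s₀.1 = piW σ t₀.1 := by
        have := hsep
        simp only [sepIt, Sum.inr.injEq, Sum.inl.injEq, Prod.mk.injEq] at this
        exact this
      obtain ⟨hlet, hpi⟩ := hsep'
      have hih := ih sV' rU rV hlen' (fun s hs => hgood s (by simp [hs])) hgoodr hrest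
      -- segment relation
      have hseg : LeSigma zeroTopLe σ (s₀.1 ++ [s₀.2]) (t₀.1 ++ [t₀.2]) := by
        by_cases hs₀ : s₀.1 = []
        · have ht₀ : t₀.1 = [] := by
            apply eq_nil_of_piW_eq_one σ
            rw [← hpi, hs₀, piW_nil]
          rw [hs₀, ht₀, List.nil_append, List.nil_append, hlet]
          exact leSigma_refl σ (fun s => Or.inl rfl) _
        · have hEw : (Ew σ s₀.1).Sublist (Ew σ t₀.1) :=
            sublist_of_map_sublist _ (eIt_inj B) hEsub
          obtain ⟨Bs, hflat, hfa⟩ := zfmain σ hJ s₀.1 t₀.1 hs₀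
            (hgood s₀ (by simp)) hpi hEw
          have h1 := leSigma_blocks σ (le := zeroTopLe)
            (hfa.imp (fun {a B} h => by
              obtain ⟨b, t, hbt, heq⟩ := h
              exact ⟨b, t, hbt, Or.inl heq.symm⟩))
          rw [hflat] at h1
          have h2 : LeSigma zeroTopLe σ [s₀.2] [t₀.2] := by
            rw [hlet]
            exact leSigma_refl σ (fun s => Or.inl rfl) _
          exact leSigma_append σ h1 h2
      have := leSigma_append σ hseg hih
      simpa [List.append_assoc] using this


end Stmt13Aux

namespace Stmt13Aux

/-- Higman's lemma specialised to equality over a finite alphabet. -/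
lemma higman_univ {Γ : Type} [Finite Γ] (g : ℕ → List Γ) :
    ∃ i j : ℕ, i < j ∧ (g i).Sublist (g j) := by
  haveI : IsRefl Γ (· = ·) := ⟨fun _ => rfl⟩
  haveI : IsTrans Γ (· = ·) := ⟨fun _ _ _ h1 h2 => h1.trans h2⟩
  have pwo : (Set.univ : Set Γ).PartiallyWellOrderedOn (· = ·) := by
    rw [Set.partiallyWellOrderedOn_iff_exists_lt]; intro f _
    obtain ⟨a, b, hab, he⟩ := Finite.exists_ne_map_eq_of_infinite f
    rcases lt_or_gt_of_ne hab with h | h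
    · exact ⟨a, b, h, he⟩
    · exact ⟨b, a, h, he.symm⟩
  have h2 := pwo.partiallyWellOrderedOn_sublistForall₂ (r := (· = ·))
  obtain ⟨i, j, hij, hsf⟩ := h2.exists_lt (f := g) (fun n x _ => Set.mem_univ x)
  refine ⟨i, j, hij, ?_⟩
  obtain ⟨l, hf, hs⟩ := List.sublistForall₂_iff.mp hsf
  have : g i = l := by
    have := List.forall₂_eq_eq_eq (α := Γ) ▸ hf
    exact this
  rwa [this]

end Stmt13Aux

/-- a finite `0`-simple semigroup (exactly two distinct ideals,
namely `{0}` and `S`), ordered by `x ≤ y ↔ x = y ∨ y = 0`, carries a stable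
partial order and is congenial. -/
theorem stmt_13 {S : Type} [Fintype S] [SemigroupWithZero S]
    (hideal0 : IsIdeal ({0} : Set S))
    (hidealU : IsIdeal (Set.univ : Set S))
    (hne : ({0} : Set S) ≠ Set.univ)
    (honlytwo : ∀ I : Set S, IsIdeal I → I = {0} ∨ I = Set.univ) :
    ((∀ x : S, zeroTopLe x x) ∧
      (∀ x y z : S, zeroTopLe x y → zeroTopLe y z → zeroTopLe x z) ∧
      (∀ x y : S, zeroTopLe x y → zeroTopLe y x → x = y)) ∧
    Stable (zeroTopLe (S := S)) ∧
    Congenial S zeroTopLe := by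
  classical
  refine ⟨⟨fun x => Or.inl rfl, ?_, ?_⟩, ?_, ?_⟩
  · -- transitivity
    rintro x y z (rfl | hy0) (h | hz0)
    · exact Or.inl h
    · exact Or.inr hz0
    · subst hy0; exact Or.inr h.symm
    · exact Or.inr hz0
  · -- antisymmetry
    rintro x y (rfl | hy0) h
    · rfl
    · subst hy0; rcases h with rfl | rfl <;> rfl
  · -- stability
    rintro x y s (rfl | hy0)
    · exact ⟨Or.inl rfl, Or.inl rfl⟩
    · subst hy0; exact ⟨Or.inr (mul_zero s), Or.inr (zero_mul s)⟩
  · -- congeniality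
    intro A _ σ f
    haveI : Finite (WithOne S) := inferInstanceAs (Finite (Option S))
    have hJ : Stmt13Aux.JFull S := Stmt13Aux.jfull_of_onlytwo honlytwo
    by_cases hrep : ∃ i j : ℕ, i < j ∧ f i = f j
    · obtain ⟨i, j, hij, hfij⟩ := hrep
      exact ⟨i, j, hij, hfij ▸ Stmt13Aux.leSigma_refl σ (fun s => Or.inl rfl) (f i)⟩
    · push_neg at hrep
      by_cases hbd : ∃ B : ℕ, ∀ n, Stmt13Aux.zeta σ (f n) ≤ B
      · -- bounded number of zero segments: Higman argument
        obtain ⟨B, hB⟩ := hbd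
        haveI : Finite (Stmt13Aux.Gam S A B) := by
          haveI : Finite A := Finite.of_fintype A
          infer_instance
        obtain ⟨i, j, hij, hsub⟩ := Stmt13Aux.higman_univ (fun n =>
          Stmt13Aux.initIt B ⟨Stmt13Aux.zeta σ (f n), Nat.lt_succ_of_le (hB n)⟩ ::
            ((((Stmt13Aux.scanZ σ (f n) []).1).map (Stmt13Aux.segCode σ B)).flatten ++
              Stmt13Aux.tailCode σ B (Stmt13Aux.scanZ σ (f n) []).2))
        have hkey := Stmt13Aux.key_split (Stmt13Aux.isInit B) [] []
          (β₁ := (((Stmt13Aux.scanZ σ (f i) []).1).map (Stmt13Aux.segCode σ B)).flatten ++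
              Stmt13Aux.tailCode σ B (Stmt13Aux.scanZ σ (f i) []).2)
          (β₂ := (((Stmt13Aux.scanZ σ (f j) []).1).map (Stmt13Aux.segCode σ B)).flatten ++
              Stmt13Aux.tailCode σ B (Stmt13Aux.scanZ σ (f j) []).2)
          (s := Stmt13Aux.initIt B ⟨Stmt13Aux.zeta σ (f i), Nat.lt_succ_of_le (hB i)⟩)
          (s' := Stmt13Aux.initIt B ⟨Stmt13Aux.zeta σ (f j), Nat.lt_succ_of_le (hB j)⟩)
          hsub rfl rfl (by simp) (by simp)
          (by
            rw [Stmt13Aux.countP_init_code, List.countP_cons, Stmt13Aux.countP_init_code]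
            simp [Stmt13Aux.isInit, Stmt13Aux.initIt])
        obtain ⟨-, hinit, hrest⟩ := hkey
        have hzeq : Stmt13Aux.zeta σ (f i) = Stmt13Aux.zeta σ (f j) := by
          have := hinit
          simp only [Stmt13Aux.initIt, Sum.inl.injEq, Fin.mk.injEq] at this
          exact this
        have hdec := Stmt13Aux.decode σ B hJ (Stmt13Aux.scanZ σ (f i) []).1
          (Stmt13Aux.scanZ σ (f j) []).1 (Stmt13Aux.scanZ σ (f i) []).2
          (Stmt13Aux.scanZ σ (f j) []).2 hzeq
          ((Stmt13Aux.scan_good σ (f i) [] (Stmt13Aux.goodBuf_nil σ)).1)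
          ((Stmt13Aux.scan_good σ (f i) [] (Stmt13Aux.goodBuf_nil σ)).2) hrest
        have hfi := Stmt13Aux.scan_flat σ (f i) []
        have hfj := Stmt13Aux.scan_flat σ (f j) []
        rw [List.nil_append] at hfi hfj
        rw [hfi, hfj] at hdec
        exact ⟨i, j, hij, hdec⟩
      · -- unboundedly many zero segments
        push_neg at hbd
        obtain ⟨i₀, hi₀ne, hi₀le⟩ : ∃ i₀ : ℕ, f i₀ ≠ [] ∧ i₀ ≤ 1 := by
          by_cases h0 : f 0 = []
          · refine ⟨1, fun h1 => ?_, le_refl 1⟩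
            exact hrep 0 1 Nat.one_pos (h0.trans h1.symm)
          · exact ⟨0, h0, Nat.zero_le 1⟩
        obtain ⟨n, hn⟩ := hbd (max (f i₀).length
          (max (Stmt13Aux.zeta σ (f 0)) (Stmt13Aux.zeta σ (f 1))))
        have h1n : 1 < n := by
          rcases Nat.lt_or_ge n 2 with h | h
          · interval_cases n
            · exact absurd hn (not_lt.mpr (le_max_of_le_right (le_max_left _ _)))
            · exact absurd hn (not_lt.mpr (le_max_of_le_right (le_max_right _ _)))
          · omega
        have hi₀n : i₀ < n := lt_of_le_of_lt hi₀le h1n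
        have hlen : (f i₀).length ≤ (Stmt13Aux.scanZ σ (f n) []).1.length :=
          le_of_lt (lt_of_le_of_lt (le_max_left _ _) hn)
        have hflat := Stmt13Aux.scan_flat σ (f n) []
        rw [List.nil_append] at hflat
        refine ⟨i₀, n, hi₀n, ?_⟩
        rw [← hflat]
        exact Stmt13Aux.leSigma_zero_blocks σ (f i₀) (Stmt13Aux.scanZ σ (f n) []).1
          (Stmt13Aux.scanZ σ (f n) []).2 hi₀ne hlen (Stmt13Aux.scan_zero σ (f n) [])
end

section
/- Let S be a finite ordered semigroup and let s, t ∈ S. Then there exists an integer p ≥ 1 such that s ≤ s·(t·s)^p if and only if s ≤ s·(t·s)^ω. -/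

lemma sPow_add {S : Type} [Semigroup S] (x : S) (m n : ℕ) :
    sPow x (m + n + 1) = sPow x m * sPow x n := by
  induction n with
  | zero => rfl
  | succ n ih =>
    show sPow x (m + n + 1) * x = _
    rw [ih, mul_assoc]; rfl

lemma exists_idemPow {S : Type} [Fintype S] [Semigroup S] (x : S) :
    ∃ n : ℕ, sPow x n * sPow x n = sPow x n := by
  obtain ⟨i, j, hij, heq⟩ : ∃ i j : ℕ, i < j ∧ sPow x i = sPow x j := by
    obtain ⟨a, b, hne, hab⟩ := Finite.exists_ne_map_eq_of_infinite (sPow x)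
    rcases lt_or_gt_of_ne hne with h | h
    · exact ⟨a, b, h, hab⟩
    · exact ⟨b, a, h, hab.symm⟩
  set d := j - i with hd
  have hd1 : 1 ≤ d := by omega
  have hij' : j = i + d := by omega
  have shift : ∀ m, sPow x (i + m) = sPow x (i + d + m) := by
    intro m
    induction m with
    | zero => rw [Nat.add_zero, Nat.add_zero, ← hij']; exact heq
    | succ m ih =>
      have h1 : i + (m + 1) = (i + m) + 1 := by omega
      have h2 : i + d + (m + 1) = (i + d + m) + 1 := by omega
      rw [h1, h2]
      show sPow x (i + m) * x = sPow x (i + d + m) * x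
      rw [ih]
  have per : ∀ m k, sPow x (i + m) = sPow x (i + m + k * d) := by
    intro m k
    induction k with
    | zero => simp
    | succ k ih =>
      rw [ih]
      have h1 : i + m + (k + 1) * d = i + d + (m + k * d) := by ring
      have h2 : i + m + k * d = i + (m + k * d) := by ring
      rw [h1, h2, shift]
  set M := (i + 1) * d with hM
  have hMi : i + 1 ≤ M := Nat.le_mul_of_pos_right _ hd1
  refine ⟨M - 1, ?_⟩
  have h1 : sPow x (M - 1) * sPow x (M - 1) = sPow x (M - 1 + M) := by
    rw [← sPow_add]; congr 1; omega
  rw [h1]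
  have h2 : M - 1 + M = i + (M - 1 - i) + (i + 1) * d := by omega
  have h3 : M - 1 = i + (M - 1 - i) := by omega
  rw [h2, ← per, ← h3]

lemma sPow_idem {S : Type} [Semigroup S] {e : S} (he : e * e = e) :
    ∀ k, sPow e k = e
  | 0 => rfl
  | k + 1 => by show sPow e k * e = e; rw [sPow_idem he k, he]

lemma sPow_mul_struct {S : Type} [Semigroup S] (x : S) (n : ℕ) :
    ∀ k, sPow x (k * (n + 1) + n) = sPow (sPow x n) k
  | 0 => by rw [Nat.zero_mul, Nat.zero_add]; rfl
  | k + 1 => by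
    have h : (k + 1) * (n + 1) + n = (k * (n + 1) + n) + n + 1 := by ring
    rw [h, sPow_add, sPow_mul_struct x n k]; rfl

/-- in a finite ordered semigroup, `s ≤ s·(t·s)^p` for some
`p ≥ 1` iff `s ≤ s·(t·s)^ω`.  Here `sPow (t*s) p = (t·s)^(p+1)` ranges over
all positive powers, and the `ω`-power is (uniquely) described by `IsIdemPow`. -/
theorem stmt_16 {S : Type} [Fintype S] [Semigroup S] [PartialOrder S]
    (hst : Stable ((· ≤ ·) : S → S → Prop)) (s t : S) :
    (∃ p : ℕ, s ≤ s * sPow (t * s) p) ↔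
      (∀ e : S, IsIdemPow (t * s) e → s ≤ s * e) := by
  set x := t * s with hx
  constructor
  · rintro ⟨p, hp⟩ e ⟨⟨n, hn⟩, hidem⟩
    have claim : ∀ k, s ≤ s * sPow x (k * (p + 1) + p) := by
      intro k
      induction k with
      | zero => simpa using hp
      | succ k ih =>
        have h1 : (k + 1) * (p + 1) + p = p + (k * (p + 1) + p) + 1 := by ring
        have step : s * sPow x (k * (p + 1) + p) ≤
            s * sPow x p * sPow x (k * (p + 1) + p) :=
          (hst _ _ _ hp).2
        calc s ≤ s * sPow x (k * (p + 1) + p) := ih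
          _ ≤ s * sPow x p * sPow x (k * (p + 1) + p) := step
          _ = s * sPow x ((k + 1) * (p + 1) + p) := by
              rw [h1, sPow_add, ← mul_assoc]
    have he : sPow x (p * (n + 1) + n) = e := by
      rw [sPow_mul_struct, ← hn, sPow_idem hidem]
    have harith : n * (p + 1) + p = p * (n + 1) + n := by ring
    have := claim n
    rw [harith, he] at this
    exact this
  · intro h
    obtain ⟨n, hn⟩ := exists_idemPow x
    exact ⟨n, h (sPow x n) ⟨⟨n, rfl⟩, hn⟩⟩
end
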